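/- Let K be a real number with 0 < K < 1 and fix real numbers λ, μ in (0,1) with λ + μ > 1. Define Ω_{λ,μ} = { (α,β) ∈ ℝ² : 0 < α < μ, |β| < λ, |αβ - K/(λ+μ-1)| < (1-λ)(1-μ) }. Then Ω_{λ,μ} is nonempty if and only if (λ,μ) belongs to Θ. Moreover, in that case, (α,β) belongs to Ω_{λ,μ} if and only if α > 0, (K/(λ+μ-1) - (1-λ)(1-μ))/λ < α < μ, and max{ -λ, (K/(λ+μ-1) - (1-λ)(1-μ))/α } < β < min{ λ, (K/(λ+μ-1) + (1-λ)(1-μ))/α }. -/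
import Mathlib


/-- The polynomial `r_K(z) = z³ + z - 2K`. -/
def rK (K z : ℝ) : ℝ := z ^ 3 + z - 2 * K

/-- The set `Θ` of pairs `(λ,μ) ∈ (0,1)²` with `ν₀ + 1 ≤ λ + μ < 2` and
`|λ - μ| < min { 2 - λ - μ, √(r_K(λ+μ-1)/(λ+μ-1)) }`. -/
noncomputable def Theta (K ν : ℝ) : Set (ℝ × ℝ) :=
  {p | p.1 ∈ Set.Ioo (0 : ℝ) 1 ∧ p.2 ∈ Set.Ioo (0 : ℝ) 1 ∧
    ν + 1 ≤ p.1 + p.2 ∧ p.1 + p.2 < 2 ∧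
    |p.1 - p.2| <
      min (2 - p.1 - p.2) (Real.sqrt (rK K (p.1 + p.2 - 1) / (p.1 + p.2 - 1)))}

/-- The set `Ω_{λ,μ}`. -/
noncomputable def OmegaLM (K lam mu : ℝ) : Set (ℝ × ℝ) :=
  {p | 0 < p.1 ∧ p.1 < mu ∧ |p.2| < lam ∧
    |p.1 * p.2 - K / (lam + mu - 1)| < (1 - lam) * (1 - mu)}

set_option maxHeartbeats 1600000 in
theorem stmt_16 (K : ℝ) (hK0 : 0 < K) (hK1 : K < 1) (ν : ℝ)
    (hν : 0 < ν ∧ rK K ν = 0)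
    (hνu : ∀ t : ℝ, 0 < t → rK K t = 0 → t = ν)
    (lam mu : ℝ) (hlam : lam ∈ Set.Ioo (0 : ℝ) 1) (hmu : mu ∈ Set.Ioo (0 : ℝ) 1)
    (hsum : 1 < lam + mu) :
    ((OmegaLM K lam mu).Nonempty ↔ (lam, mu) ∈ Theta K ν) ∧
      ((lam, mu) ∈ Theta K ν →
        ∀ al be : ℝ,
          (al, be) ∈ OmegaLM K lam mu ↔
            (0 < al ∧
              (K / (lam + mu - 1) - (1 - lam) * (1 - mu)) / lam < al ∧ al < mu ∧
              max (-lam) ((K / (lam + mu - 1) - (1 - lam) * (1 - mu)) / al) < be ∧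
              be < min lam ((K / (lam + mu - 1) + (1 - lam) * (1 - mu)) / al))) := by

  obtain ⟨hl0, hl1⟩ := hlam
  obtain ⟨hm0, hm1⟩ := hmu
  obtain ⟨hν0, hνr⟩ := hν
  have hs : 0 < lam + mu - 1 := by linarith
  have hD : 0 < (1 - lam) * (1 - mu) := by nlinarith
  have hC : 0 < K / (lam + mu - 1) := div_pos hK0 hs
  have hνr' : ν ^ 3 + ν - 2 * K = 0 := hνr
  -- key reformulation of Theta membership
  have hkey : (lam, mu) ∈ Theta K ν ↔
      K < (lam + mu - 1) * (2 * lam * mu - (lam + mu - 1)) := by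
    simp only [Theta, Set.mem_setOf_eq]
    constructor
    · rintro ⟨-, -, -, -, hmin⟩
      have hmin2 := lt_of_lt_of_le hmin (min_le_right _ _)
      have h1 := (Real.lt_sqrt (abs_nonneg _)).mp hmin2
      rw [sq_abs, lt_div_iff₀ hs] at h1
      simp only [rK] at h1
      nlinarith [h1]
    · intro h
      have hr : 0 < (lam + mu - 1) ^ 3 + (lam + mu - 1) - 2 * K := by
        nlinarith [sq_nonneg (lam - mu)]
      have hνs : ν ≤ lam + mu - 1 := by
        by_contra hc
        push_neg at hc
        have hp : 0 < (ν - (lam + mu - 1)) *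
            (ν ^ 2 + ν * (lam + mu - 1) + (lam + mu - 1) ^ 2 + 1) := by
          apply mul_pos (by linarith)
          nlinarith [sq_nonneg (ν + (lam + mu - 1)), sq_nonneg ν, sq_nonneg (lam + mu - 1)]
        nlinarith [hp]
      refine ⟨⟨hl0, hl1⟩, ⟨hm0, hm1⟩, by linarith, by linarith, lt_min ?_ ?_⟩
      · rw [abs_sub_lt_iff]; constructor <;> linarith
      · rw [Real.lt_sqrt (abs_nonneg _), sq_abs, lt_div_iff₀ hs]
        simp only [rK]
        nlinarith [h]
  constructor
  · rw [hkey]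
    constructor
    · rintro ⟨⟨al, be⟩, ha0, ham, hbl, habs⟩
      simp only at ha0 ham hbl habs
      rw [abs_lt] at hbl habs
      have e1 : al * be < al * lam := mul_lt_mul_of_pos_left hbl.2 ha0
      have e2 : al * lam < mu * lam := mul_lt_mul_of_pos_right ham hl0
      have h3 : K / (lam + mu - 1) < 2 * lam * mu - (lam + mu - 1) := by
        nlinarith [habs.1]
      have h4 := (div_lt_iff₀ hs).mp h3
      nlinarith [h4]
    · intro h
      have hCD : K / (lam + mu - 1) - (1 - lam) * (1 - mu) < lam * mu := by
        have h3 : K / (lam + mu - 1) < 2 * lam * mu - (lam + mu - 1) := by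
          rw [div_lt_iff₀ hs]; nlinarith [h]
        nlinarith [h3]
      have hlm : 0 < lam * mu := mul_pos hl0 hm0
      obtain ⟨C, hCdef⟩ : ∃ C : ℝ, C = K / (lam + mu - 1) := ⟨_, rfl⟩
      obtain ⟨D, hDdef⟩ : ∃ D : ℝ, D = (1 - lam) * (1 - mu) := ⟨_, rfl⟩
      rw [← hCdef, ← hDdef] at hCD
      have hC' : 0 < C := hCdef ▸ hC
      have hD' : 0 < D := hDdef ▸ hD
      have hmm : max (C - D) 0 < min (C + D) (lam * mu) :=
        max_lt (lt_min (by linarith) hCD) (lt_min (by linarith) hlm)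
      obtain ⟨t, htdef⟩ : ∃ t : ℝ, t = (max (C - D) 0 + min (C + D) (lam * mu)) / 2 :=
        ⟨_, rfl⟩
      have ht1 : max (C - D) 0 < t := by rw [htdef]; linarith
      have ht2 : t < min (C + D) (lam * mu) := by rw [htdef]; linarith
      have htpos : 0 < t := lt_of_le_of_lt (le_max_right (C - D) 0) ht1
      have htlm : t < lam * mu := lt_of_lt_of_le ht2 (min_le_right _ _)
      have htl : C - D < t := lt_of_le_of_lt (le_max_left (C - D) 0) ht1
      have htu : t < C + D := lt_of_lt_of_le ht2 (min_le_left _ _)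
      have hta : t / lam < mu := by
        rw [div_lt_iff₀ hl0]; linarith [htlm, mul_comm lam mu]
      have htl0 : 0 < t / lam := div_pos htpos hl0
      obtain ⟨al, haldef⟩ : ∃ al : ℝ, al = (t / lam + mu) / 2 := ⟨_, rfl⟩
      have ha0 : 0 < al := by rw [haldef]; linarith
      have hal : t / lam < al := by rw [haldef]; linarith
      have ham : al < mu := by rw [haldef]; linarith
      obtain ⟨be, hbedef⟩ : ∃ be : ℝ, be = t / al := ⟨_, rfl⟩
      have hbe0 : 0 < be := hbedef ▸ div_pos htpos ha0
      have htall : t < al * lam := (div_lt_iff₀ hl0).mp hal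
      have hbel : be < lam := by
        rw [hbedef, div_lt_iff₀ ha0]; linarith [htall, mul_comm al lam]
      have hab : al * be = t := by
        rw [hbedef]; field_simp
      refine ⟨(al, be), ha0, ham, ?_, ?_⟩
      · simp only
        rw [abs_of_pos hbe0]; exact hbel
      · simp only
        rw [abs_lt]
        constructor
        · linarith [hab, htl, hCdef, hDdef]
        · linarith [hab, htu, hCdef, hDdef]
  · intro _ al be
    simp only [OmegaLM, Set.mem_setOf_eq]
    constructor
    · rintro ⟨ha0, ham, hbl, habs⟩
      rw [abs_lt] at hbl habs
      refine ⟨ha0, ?_, ham, max_lt (by linarith [hbl.1]) ?_,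
        lt_min (by linarith [hbl.2]) ?_⟩
      · rw [div_lt_iff₀ hl0]
        have e1 : al * be < al * lam := mul_lt_mul_of_pos_left hbl.2 ha0
        linarith [habs.1, e1]
      · rw [div_lt_iff₀ ha0]
        linarith [habs.1, mul_comm al be]
      · rw [lt_div_iff₀ ha0]
        linarith [habs.2, mul_comm al be]
    · rintro ⟨ha0, hKal, ham, hmax, hmin⟩
      rw [max_lt_iff] at hmax
      rw [lt_min_iff] at hmin
      have h1 := (div_lt_iff₀ ha0).mp hmax.2
      have h2 := (lt_div_iff₀ ha0).mp hmin.2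
      refine ⟨ha0, ham, abs_lt.mpr ⟨hmax.1, hmin.1⟩, abs_lt.mpr ⟨?_, ?_⟩⟩
      · linarith [h1, mul_comm al be]
      · linarith [h2, mul_comm al be]
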